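/- Size optimality of the greedy spanner for stretch t < 2: Let M be a metric space, 1 ≤ t < 2, and H the greedy t-spanner of M. Then for every t-spanner H' of the induced metric space M_H, the number of edges of H is at most the number of edges of H'. -/

import Mathlib

open SimpleGraph
open scoped ENNReal

variable {V : Type*} [Fintype V] [DecidableEq V]

/-- The simple graph determined by a finite edge set. -/
def toSG (E : Finset (Sym2 V)) : SimpleGraph V := SimpleGraph.fromEdgeSet (↑E)

/-- Weight (in `ℝ≥0∞`) of a walk, given edge weights `w`. -/
noncomputable def walkWeight (w : Sym2 V → ℝ) {G : SimpleGraph V} {u v : V}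
    (p : G.Walk u v) : ℝ≥0∞ :=
  (p.edges.map fun e => ENNReal.ofReal (w e)).sum

/-- Shortest-path distance (in `ℝ≥0∞`) between the endpoints of the pair `e`
in the graph with edge set `H` and edge weights `w`.  (`⊤` if disconnected.) -/
noncomputable def edist (H : Finset (Sym2 V)) (w : Sym2 V → ℝ) (e : Sym2 V) : ℝ≥0∞ :=
  sInf {x | ∃ (u v : V) (p : (toSG H).Walk u v), e = s(u, v) ∧ walkWeight w p = x}

/-- Total weight of an edge set. -/
noncomputable def gweight (w : Sym2 V → ℝ) (H : Finset (Sym2 V)) : ℝ := ∑ e ∈ H, w e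

/-- `H` is a `t`-spanner of the graph with edge set `E` and weights `w`. -/
def IsSpanner (w : Sym2 V → ℝ) (t : ℝ) (E H : Finset (Sym2 V)) : Prop :=
  H ⊆ E ∧ ∀ u v : V, edist H w s(u, v) ≤ ENNReal.ofReal t * edist E w s(u, v)

open Classical in
/-- One pass of the greedy algorithm over a list of candidate edges. -/
noncomputable def greedyList (w : Sym2 V → ℝ) (t : ℝ) :
    List (Sym2 V) → Finset (Sym2 V) → Finset (Sym2 V)
  | [], H => H
  | e :: l, H =>
      greedyList w t l (if ENNReal.ofReal (t * w e) < edist H w e then insert e H else H)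

/-- `H` is an output of the greedy `t`-spanner algorithm on the graph with
edge set `E` and weights `w`: the edges of `E` are processed in some
non-decreasing order of weight. -/
def IsGreedy (w : Sym2 V → ℝ) (t : ℝ) (E H : Finset (Sym2 V)) : Prop :=
  ∃ l : List (Sym2 V), l.Nodup ∧ (∀ e, e ∈ l ↔ e ∈ E) ∧
    l.Pairwise (fun a b => w a ≤ w b) ∧ greedyList w t l ∅ = H

/-- `T` is a minimum spanning tree of the graph with edge set `E` and weights `w`. -/
def IsMST (w : Sym2 V → ℝ) (E T : Finset (Sym2 V)) : Prop :=
  T ⊆ E ∧ (toSG T).IsTree ∧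
    ∀ T' ⊆ E, (toSG T').IsTree → gweight w T ≤ gweight w T'

/-- The edge set of the complete graph on `V`. -/
def completeE (V : Type*) [Fintype V] [DecidableEq V] : Finset (Sym2 V) :=
  Finset.univ.filter fun e => ¬ e.IsDiag

/-- Metric distance as a weight function on unordered pairs. -/
noncomputable def mw (V : Type*) [MetricSpace V] : Sym2 V → ℝ :=
  Sym2.lift ⟨dist, fun a b => dist_comm a b⟩

/-- The weight function of the metric space induced by the graph with
edge set `H` and weights `w` (shortest-path distances of pairs). -/
noncomputable def indw (H : Finset (Sym2 V)) (w : Sym2 V → ℝ) : Sym2 V → ℝ :=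
  fun e => (edist H w e).toReal

/-- `d` satisfies the doubling property with doubling dimension (at most) `k`:
every ball of radius `r` can be covered by at most `2 ^ k` balls of radius `r / 2`. -/
def HasDoublingDim {M : Type*} (d : M → M → ℝ) (k : ℕ) : Prop :=
  ∀ (x : M) (r : ℝ), ∃ s : Finset M, s.card ≤ 2 ^ k ∧
    ∀ y, d x y ≤ r → ∃ c ∈ s, d c y ≤ r / 2

/-!
Send each greedy edge `e = uv` to an edge `e'` of a shortest `u`–`v` path in `H'`
whose shortest route in `H` contains `e`. Such an `e'` exists: replacing each edge of the
path by its route gives a `u`–`v` walk in `H` of weight at most `t·|e|`, and every such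
walk passes through `e`, since otherwise the greedy algorithm would have rejected the
last-processed edge of the cycle formed by `e` and the walk. The map is injective because
two edges `e₁ ≠ e₂` on one route satisfy `|e₁| + |e₂| ≤ |e'| ≤ t·min(|e₁|, |e₂|)`, which is
impossible for `t < 2`.
-/

omit [Fintype V] [DecidableEq V]

lemma List.exists_eq_append_cons_and_forall_not {α : Type*} {l : List α}
    {p : α → Prop} (h : ∃ a ∈ l, p a) :
    ∃ l₁ a l₂, l = l₁ ++ a :: l₂ ∧ p a ∧ ∀ b ∈ l₂, ¬ p b := by
  classical
  obtain ⟨a, ha, hpa⟩ := h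
  obtain ⟨b, hb⟩ := Option.isSome_iff_exists.mp
    (List.find?_isSome.mpr ⟨a, List.mem_reverse.mpr ha, decide_eq_true hpa⟩ :
      (l.reverse.find? (p ·)).isSome)
  obtain ⟨hpb, as, bs, hrev, has⟩ := List.find?_eq_some_iff_append.mp hb
  refine ⟨bs.reverse, b, as.reverse, ?_, by simpa using hpb, fun c hc => ?_⟩
  · rw [← List.reverse_reverse l, hrev]; simp
  · simpa using has c (List.mem_reverse.mp hc)

section WalkWeight

variable (w : Sym2 V → ℝ) {G : SimpleGraph V} {u v x : V}

@[simp] lemma walkWeight_nil : walkWeight w (Walk.nil : G.Walk u u) = 0 := by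
  simp [walkWeight]

@[simp] lemma walkWeight_cons (h : G.Adj u v) (p : G.Walk v x) :
    walkWeight w (Walk.cons h p) = ENNReal.ofReal (w s(u, v)) + walkWeight w p := by
  simp [walkWeight]

@[simp] lemma walkWeight_append (p : G.Walk u v) (q : G.Walk v x) :
    walkWeight w (p.append q) = walkWeight w p + walkWeight w q := by
  simp [walkWeight]

@[simp] lemma walkWeight_reverse (p : G.Walk u v) : walkWeight w p.reverse = walkWeight w p := by
  simp [walkWeight, List.sum_reverse]

lemma walkWeight_transfer (p : G.Walk u v) {G' : SimpleGraph V}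
    (hp : ∀ e ∈ p.edges, e ∈ G'.edgeSet) :
    walkWeight w (p.transfer G' hp) = walkWeight w p := by
  simp [walkWeight]

lemma walkWeight_eq_ofReal (hw : ∀ e, 0 ≤ w e) (p : G.Walk u v) :
    walkWeight w p = ENNReal.ofReal (p.edges.map w).sum := by
  induction p with
  | nil => simp
  | cons h p ih =>
    rw [walkWeight_cons, ih, ← ENNReal.ofReal_add (hw _)
      (List.sum_nonneg (List.forall_mem_map.mpr fun e _ => hw e))]
    simp

lemma ofReal_le_walkWeight_of_mem {p : G.Walk u v} {e : Sym2 V} (he : e ∈ p.edges) :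
    ENNReal.ofReal (w e) ≤ walkWeight w p :=
  List.le_sum_of_mem (List.mem_map_of_mem he)

lemma walkWeight_bypass_le [DecidableEq V] (p : G.Walk u v) :
    walkWeight w p.bypass ≤ walkWeight w p := by
  obtain ⟨l, hperm, hsub⟩ :=
    p.bypass_isPath.edges_nodup.subperm p.edges_bypass_subset_edges
  rw [walkWeight, ← (hperm.map _).sum_eq]
  exact (hsub.map _).sum_le_sum fun _ _ => zero_le

end WalkWeight

section Edist

variable {H S : Finset (Sym2 V)} (w : Sym2 V → ℝ) {a b : V}

lemma toSG_adj : (toSG H).Adj a b ↔ s(a, b) ∈ H ∧ a ≠ b := by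
  simp [toSG]

lemma mem_of_mem_edges_toSG {p : (toSG H).Walk a b} {e : Sym2 V} (he : e ∈ p.edges) :
    e ∈ H := by
  have := p.edges_subset_edgeSet he
  simp only [toSG, edgeSet_fromEdgeSet, Set.mem_sdiff, Finset.mem_coe] at this
  exact this.1

lemma edist_le_walkWeight_of_subset (p : (toSG H).Walk a b) (hp : ∀ e ∈ p.edges, e ∈ S) :
    edist S w s(a, b) ≤ walkWeight w p := by
  have hp' : ∀ e ∈ p.edges, e ∈ (toSG S).edgeSet := fun e he => by
    have := p.edges_subset_edgeSet he
    simp only [toSG, edgeSet_fromEdgeSet, Set.mem_sdiff, Finset.mem_coe] at this ⊢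
    exact ⟨hp e he, this.2⟩
  exact sInf_le ⟨a, b, p.transfer _ hp', rfl, walkWeight_transfer w p hp'⟩

lemma edist_le_walkWeight (p : (toSG H).Walk a b) : edist H w s(a, b) ≤ walkWeight w p :=
  edist_le_walkWeight_of_subset w p fun _ => mem_of_mem_edges_toSG

lemma le_edist {c : ℝ≥0∞} (h : ∀ p : (toSG H).Walk a b, c ≤ walkWeight w p) :
    c ≤ edist H w s(a, b) := by
  refine le_sInf ?_
  rintro x ⟨u, v, p, he, rfl⟩
  rcases Sym2.eq_iff.mp he with ⟨rfl, rfl⟩ | ⟨rfl, rfl⟩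
  · exact h p
  · exact walkWeight_reverse w p ▸ h p.reverse

lemma edist_anti (hSH : S ⊆ H) (e : Sym2 V) : edist H w e ≤ edist S w e := by
  induction e using Sym2.ind with
  | _ a b => exact le_edist w fun p =>
      edist_le_walkWeight_of_subset w p fun _ he => hSH (mem_of_mem_edges_toSG he)

lemma exists_walk_of_mem (h : s(a, b) ∈ H) : ∃ p : (toSG H).Walk a b,
    walkWeight w p ≤ ENNReal.ofReal (w s(a, b)) ∧ ∀ e ∈ p.edges, e = s(a, b) := by
  by_cases hab : a = b
  · subst hab
    exact ⟨Walk.nil, by simp, by simp⟩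
  · exact ⟨Walk.cons (toSG_adj.mpr ⟨h, hab⟩) Walk.nil, by simp, by simp⟩

lemma edist_le_of_mem {e : Sym2 V} (h : e ∈ H) : edist H w e ≤ ENNReal.ofReal (w e) := by
  induction e using Sym2.ind with
  | _ a b =>
    obtain ⟨p, hp, -⟩ := exists_walk_of_mem w h
    exact (edist_le_walkWeight w p).trans hp

lemma exists_isPath_walkWeight_eq_edist [Fintype V]
    (h : edist H w s(a, b) ≠ ⊤) :
    ∃ p : (toSG H).Walk a b, p.IsPath ∧ walkWeight w p = edist H w s(a, b) := by
  classical
  obtain ⟨p₀⟩ : Nonempty ((toSG H).Walk a b) := by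
    by_contra hno
    exact h (top_le_iff.mp (le_edist w fun p => absurd ⟨p⟩ hno))
  have : Nonempty ((toSG H).Path a b) := ⟨⟨p₀.bypass, p₀.bypass_isPath⟩⟩
  obtain ⟨q, hq⟩ := Finite.exists_min fun q : (toSG H).Path a b => walkWeight w q.val
  refine ⟨q.val, q.isPath, le_antisymm ?_ (edist_le_walkWeight w _)⟩
  exact le_edist w fun p =>
    (hq ⟨p.bypass, p.bypass_isPath⟩).trans (walkWeight_bypass_le w p)

end Edist

section Metric

variable {M : Type*} [MetricSpace M]

lemma mw_nonneg (e : Sym2 M) : 0 ≤ mw M e := by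
  induction e using Sym2.ind with
  | _ a b => exact dist_nonneg

lemma mw_pos {e : Sym2 M} (he : ¬ e.IsDiag) : 0 < mw M e := by
  induction e using Sym2.ind with
  | _ a b => exact dist_pos.mpr fun hab => he (Sym2.mk_isDiag_iff.mpr hab)

end Metric

section GreedyList

variable [DecidableEq V] (w : Sym2 V → ℝ) (t : ℝ)

lemma subset_greedyList (l : List (Sym2 V)) (H₀ : Finset (Sym2 V)) :
    H₀ ⊆ greedyList w t l H₀ := by
  induction l generalizing H₀ with
  | nil => exact subset_rfl
  | cons e l ih =>
    refine subset_trans ?_ (ih _)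
    split_ifs
    exacts [Finset.subset_insert e H₀, subset_rfl]

lemma greedyList_subset (l : List (Sym2 V)) (H₀ : Finset (Sym2 V)) :
    greedyList w t l H₀ ⊆ H₀ ∪ l.toFinset := by
  induction l generalizing H₀ with
  | nil => simp [greedyList]
  | cons e l ih =>
    refine (ih _).trans ?_
    split_ifs
    · intro c; simp only [Finset.mem_union, Finset.mem_insert, List.toFinset_cons]; tauto
    · exact Finset.union_subset_union subset_rfl (by simp)

lemma greedyList_append (l₁ l₂ : List (Sym2 V)) (H₀ : Finset (Sym2 V)) :
    greedyList w t (l₁ ++ l₂) H₀ = greedyList w t l₂ (greedyList w t l₁ H₀) := by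
  induction l₁ generalizing H₀ with
  | nil => rfl
  | cons e l ih => exact ih _

lemma edist_greedyList_le (ht : 1 ≤ t) (hw : ∀ e, 0 ≤ w e) {l : List (Sym2 V)}
    {H₀ : Finset (Sym2 V)} {e : Sym2 V} (he : e ∈ l) :
    edist (greedyList w t l H₀) w e ≤ ENNReal.ofReal (t * w e) := by
  induction l generalizing H₀ with
  | nil => simp at he
  | cons a l ih =>
    rcases List.mem_cons.mp he with rfl | he
    · refine (edist_anti w (subset_greedyList w t l _) e).trans ?_
      split_ifs with hadd
      · exact (edist_le_of_mem w (Finset.mem_insert_self _ _)).trans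
          (ENNReal.ofReal_le_ofReal (le_mul_of_one_le_left (hw _) ht))
      · exact not_lt.mp hadd
    · exact ih he

lemma lt_edist_of_mem_greedyList {l₁ l₂ : List (Sym2 V)} {f : Sym2 V}
    (hl : (l₁ ++ f :: l₂).Nodup) (hf : f ∈ greedyList w t (l₁ ++ f :: l₂) ∅) :
    ENNReal.ofReal (t * w f) < edist (greedyList w t l₁ ∅) w f := by
  have hf₁ : f ∉ l₁ := fun h => List.disjoint_of_nodup_append hl h List.mem_cons_self
  have hf₂ : f ∉ l₂ := (List.nodup_cons.mp (List.nodup_append.mp hl).2.1).1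
  by_contra hskip
  rw [greedyList_append, greedyList, if_neg hskip] at hf
  have := (greedyList_subset w t l₂ _).trans
    (Finset.union_subset_union (greedyList_subset w t l₁ ∅) subset_rfl) hf
  simp [hf₁, hf₂] at this

end GreedyList

lemma SimpleGraph.Walk.exists_edges_eq_append_cons {G : SimpleGraph V} {u v : V}
    (p : G.Walk u v) {f : Sym2 V} (hf : f ∈ p.edges) :
    ∃ (x y : V) (p₁ : G.Walk u x) (p₂ : G.Walk y v),
      f = s(x, y) ∧ p.edges = p₁.edges ++ f :: p₂.edges := by
  induction p with
  | nil => simp at hf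
  | @cons u c v h p ih =>
    rcases List.mem_cons.mp hf with rfl | hf
    · exact ⟨u, c, Walk.nil, p, rfl, rfl⟩
    · obtain ⟨x, y, p₁, p₂, rfl, hp⟩ := ih hf
      exact ⟨x, y, Walk.cons h p₁, p₂, rfl, by simp [hp]⟩

lemma edist_add_le_of_reroute (w : Sym2 V → ℝ) {H S : Finset (Sym2 V)} (hSH : S ⊆ H) {u v : V}
    (W : (toSG H).Walk u v) (hW : W.edges.Nodup) {f : Sym2 V} (hf : f ∈ W.edges)
    (hWS : ∀ c ∈ W.edges, c ≠ f → c ∈ S) (huv : s(u, v) ∈ S) :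
    edist S w f + ENNReal.ofReal (w f) ≤ walkWeight w W + ENNReal.ofReal (w s(u, v)) := by
  obtain ⟨x, y, p₁, p₂, rfl, hsplit⟩ := W.exists_edges_eq_append_cons hf
  rw [hsplit] at hW hWS
  have hf₁ : s(x, y) ∉ p₁.edges := fun h =>
    List.disjoint_of_nodup_append hW h List.mem_cons_self
  have hf₂ : s(x, y) ∉ p₂.edges := (List.nodup_cons.mp (List.nodup_append.mp hW).2.1).1
  obtain ⟨E, hEw, hE⟩ := exists_walk_of_mem w (hSH huv)
  have hZ : edist S w s(x, y) ≤ walkWeight w (p₁.reverse.append (E.append p₂.reverse)) := by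
    refine edist_le_walkWeight_of_subset w _ fun c hc => ?_
    simp only [Walk.edges_append, Walk.edges_reverse, List.mem_append, List.mem_reverse] at hc
    rcases hc with hc | hc | hc
    · exact hWS c (by simp [hc]) (ne_of_mem_of_not_mem hc hf₁)
    · exact hE c hc ▸ huv
    · exact hWS c (by simp [hc]) (ne_of_mem_of_not_mem hc hf₂)
  have hWw : walkWeight w W =
      walkWeight w p₁ + (ENNReal.ofReal (w s(x, y)) + walkWeight w p₂) := by
    simp only [walkWeight, hsplit, List.map_append, List.map_cons, List.sum_append, List.sum_cons]
  simp only [walkWeight_append, walkWeight_reverse] at hZ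
  calc edist S w s(x, y) + ENNReal.ofReal (w s(x, y))
      ≤ walkWeight w p₁ + (ENNReal.ofReal (w s(u, v)) + walkWeight w p₂)
        + ENNReal.ofReal (w s(x, y)) := by gcongr; exact hZ.trans (by gcongr)
    _ = walkWeight w W + ENNReal.ofReal (w s(u, v)) := by rw [hWw]; ring

section IsGreedy

variable [DecidableEq V] {w : Sym2 V → ℝ} {t : ℝ} {E H : Finset (Sym2 V)}

lemma IsGreedy.subset (hH : IsGreedy w t E H) : H ⊆ E := by
  obtain ⟨l, -, hlE, -, rfl⟩ := hH
  intro c hc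
  simpa [hlE] using greedyList_subset w t l ∅ hc

lemma IsGreedy.edist_le (hH : IsGreedy w t E H) (ht : 1 ≤ t)
    (hw : ∀ e, 0 ≤ w e) {e : Sym2 V} (he : e ∈ E) :
    edist H w e ≤ ENNReal.ofReal (t * w e) := by
  obtain ⟨l, -, hlE, -, rfl⟩ := hH
  exact edist_greedyList_le w t ht hw ((hlE e).mpr he)

lemma IsGreedy.exists_lt_edist_erase (hH : IsGreedy w t E H) {C : Finset (Sym2 V)}
    (hCH : C ⊆ H) (hC : C.Nonempty) :
    ∃ f ∈ C, (∀ c ∈ C, w c ≤ w f) ∧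
      ENNReal.ofReal (t * w f) < edist (C.erase f) w f := by
  obtain ⟨l, hl, -, hsort, rfl⟩ := hH
  have hHl : ∀ c ∈ greedyList w t l ∅, c ∈ l := fun c hc => by
    simpa using greedyList_subset w t l ∅ hc
  obtain ⟨c₀, hc₀⟩ := hC
  obtain ⟨l₁, f, l₂, rfl, hfC, hl₂⟩ :=
    List.exists_eq_append_cons_and_forall_not ⟨c₀, hHl _ (hCH hc₀), hc₀⟩
  have hl₁ : ∀ c ∈ C, c ≠ f → c ∈ l₁ := fun c hc hcf => by
    have := hHl c (hCH hc)
    simp only [List.mem_append, List.mem_cons] at this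
    exact this.resolve_right (not_or.mpr ⟨hcf, fun h => hl₂ c h hc⟩)
  refine ⟨f, hfC, fun c hc => ?_, ?_⟩
  · rcases eq_or_ne c f with rfl | hcf
    · exact le_rfl
    · exact (List.pairwise_append.mp hsort).2.2 c (hl₁ c hc hcf) f List.mem_cons_self
  · refine (lt_edist_of_mem_greedyList w t hl (hCH hfC)).trans_le (edist_anti w ?_ f)
    intro c hc
    obtain ⟨hcf, hcC⟩ := Finset.mem_erase.mp hc
    have := hCH hcC
    rw [greedyList_append] at this
    have := greedyList_subset w t (f :: l₂) _ this
    simp only [Finset.mem_union, List.mem_toFinset, List.mem_cons] at this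
    exact this.resolve_right (not_or.mpr ⟨hcf, fun h => hl₂ c h hcC⟩)

lemma IsGreedy.mem_edges_of_walkWeight_le (hH : IsGreedy w t E H) (ht : 0 ≤ t)
    (hw : ∀ e, 0 ≤ w e) {u v : V} (he : s(u, v) ∈ H) (W : (toSG H).Walk u v)
    (hW : walkWeight w W ≤ ENNReal.ofReal (t * w s(u, v))) : s(u, v) ∈ W.edges := by
  suffices h : ∀ W : (toSG H).Walk u v, W.IsPath →
      walkWeight w W ≤ ENNReal.ofReal (t * w s(u, v)) → s(u, v) ∈ W.edges from
    W.edges_bypass_subset_edges (h _ W.bypass_isPath ((walkWeight_bypass_le w W).trans hW))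
  intro W hpath hW
  by_contra hnot
  set C := insert s(u, v) W.edges.toFinset
  have hCH : C ⊆ H := Finset.insert_subset he fun c hc =>
    mem_of_mem_edges_toSG (List.mem_toFinset.mp hc)
  obtain ⟨f, hfC, hmax, hlt⟩ := hH.exists_lt_edist_erase hCH (Finset.insert_nonempty _ _)
  have hWC : ∀ c ∈ W.edges, c ≠ f → c ∈ C.erase f := fun c hc hcf =>
    Finset.mem_erase.mpr ⟨hcf, Finset.mem_insert_of_mem (List.mem_toFinset.mpr hc)⟩
  rcases eq_or_ne f s(u, v) with rfl | hfe
  · exact (hlt.trans_le ((edist_le_walkWeight_of_subset w W fun c hc =>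
      hWC c hc (ne_of_mem_of_not_mem hc hnot)).trans hW)).false
  · -- exchanging `f` for `uv` in the cycle `W + uv` leaves a walk of earlier edges between
    -- the ends of `f`, light enough that `f` would have been rejected
    have hfW : f ∈ W.edges := by simpa [C, hfe] using hfC
    have hreroute := edist_add_le_of_reroute w ((Finset.erase_subset _ _).trans hCH) W
      hpath.edges_nodup hfW hWC (Finset.mem_erase.mpr ⟨hfe.symm, Finset.mem_insert_self _ _⟩)
    have hlt' : ENNReal.ofReal (t * w f + w f) < ENNReal.ofReal (t * w s(u, v) + w s(u, v)) := by
      rw [ENNReal.ofReal_add (by positivity [hw f]) (hw f),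
        ENNReal.ofReal_add (by positivity [hw s(u, v)]) (hw _)]
      calc _ < edist (C.erase f) w f + ENNReal.ofReal (w f) :=
            ENNReal.add_lt_add_right ENNReal.ofReal_ne_top hlt
        _ ≤ _ := hreroute
        _ ≤ _ := by gcongr
    have := (ENNReal.ofReal_lt_ofReal_iff_of_nonneg (by positivity [hw f])).mp hlt'
    nlinarith [hmax _ (Finset.mem_insert_self _ _)]

end IsGreedy

lemma exists_walk_of_routes {G G' : SimpleGraph V} (w w' : Sym2 V → ℝ)
    (R : Sym2 V → Finset (Sym2 V))
    (hR : ∀ a b, G'.Adj a b → ∃ q : G.Walk a b,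
      walkWeight w q ≤ ENNReal.ofReal (w' s(a, b)) ∧ ∀ c ∈ q.edges, c ∈ R s(a, b))
    {u v : V} (p : G'.Walk u v) :
    ∃ q : G.Walk u v,
      walkWeight w q ≤ walkWeight w' p ∧ ∀ c ∈ q.edges, ∃ e ∈ p.edges, c ∈ R e := by
  induction p with
  | nil => exact ⟨Walk.nil, by simp, by simp⟩
  | @cons a b v h p ih =>
    obtain ⟨q₁, hq₁, hR₁⟩ := hR a b h
    obtain ⟨q₂, hq₂, hR₂⟩ := ih
    refine ⟨q₁.append q₂, by simpa using add_le_add hq₁ hq₂, fun c hc => ?_⟩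
    rcases List.mem_append.mp (Walk.edges_append q₁ q₂ ▸ hc) with hc | hc
    · exact ⟨s(a, b), List.mem_cons_self, hR₁ c hc⟩
    · obtain ⟨e, he, hce⟩ := hR₂ c hc
      exact ⟨e, List.mem_cons_of_mem _ he, hce⟩

lemma exists_shortest_routes [Fintype V] [DecidableEq V] (H : Finset (Sym2 V)) {w : Sym2 V → ℝ}
    (hw : ∀ e, 0 ≤ w e) (hfin : ∀ e, edist H w e ≠ ⊤) :
    ∃ R : Sym2 V → Finset (Sym2 V), (∀ e, ∑ c ∈ R e, w c = indw H w e) ∧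
      ∀ a b, ∃ q : (toSG H).Walk a b, walkWeight w q ≤ ENNReal.ofReal (indw H w s(a, b)) ∧
        ∀ c ∈ q.edges, c ∈ R s(a, b) := by
  suffices h : ∀ e, ∃ R : Finset (Sym2 V), ∑ c ∈ R, w c = indw H w e ∧
      ∀ a b, e = s(a, b) → ∃ q : (toSG H).Walk a b,
        walkWeight w q ≤ ENNReal.ofReal (indw H w e) ∧ ∀ c ∈ q.edges, c ∈ R by
    choose R hsum hR using h
    exact ⟨R, hsum, fun a b => hR _ a b rfl⟩
  intro e
  induction e using Sym2.ind with
  | _ a b =>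
    obtain ⟨p, hpath, hp⟩ := exists_isPath_walkWeight_eq_edist w (hfin s(a, b))
    have hind : ENNReal.ofReal (indw H w s(a, b)) = walkWeight w p := by
      rw [indw, ENNReal.ofReal_toReal (hfin _), hp]
    refine ⟨p.edges.toFinset, ?_, fun a' b' he => ?_⟩
    · rw [List.sum_toFinset _ hpath.edges_nodup, indw, ← hp, walkWeight_eq_ofReal w hw,
        ENNReal.toReal_ofReal (List.sum_nonneg (List.forall_mem_map.mpr fun e _ => hw e))]
    · rcases Sym2.eq_iff.mp he with ⟨rfl, rfl⟩ | ⟨rfl, rfl⟩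
      · exact ⟨p, hind.ge, fun c hc => List.mem_toFinset.mpr hc⟩
      · exact ⟨p.reverse, by simp [hind], fun c hc => by simpa using hc⟩

lemma IsGreedy.exists_mem_route [DecidableEq V] [Fintype V] {w : Sym2 V → ℝ} {t : ℝ}
    {E H H' : Finset (Sym2 V)} (hH : IsGreedy w t E H) (ht : 0 ≤ t) (hw : ∀ e, 0 ≤ w e)
    (hspan : ∀ u v : V, edist H' (indw H w) s(u, v) ≤ ENNReal.ofReal t * edist H w s(u, v))
    (R : Sym2 V → Finset (Sym2 V))
    (hR : ∀ a b, ∃ q : (toSG H).Walk a b,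
      walkWeight w q ≤ ENNReal.ofReal (indw H w s(a, b)) ∧ ∀ c ∈ q.edges, c ∈ R s(a, b))
    {e : Sym2 V} (he : e ∈ H) : ∃ e' ∈ H', e ∈ R e' ∧ indw H w e' ≤ t * w e := by
  induction e using Sym2.ind with
  | _ u v =>
    have hbound : edist H' (indw H w) s(u, v) ≤ ENNReal.ofReal (t * w s(u, v)) :=
      calc edist H' (indw H w) s(u, v) ≤ ENNReal.ofReal t * edist H w s(u, v) := hspan u v
        _ ≤ ENNReal.ofReal t * ENNReal.ofReal (w s(u, v)) := by gcongr; exact edist_le_of_mem w he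
        _ = ENNReal.ofReal (t * w s(u, v)) := (ENNReal.ofReal_mul ht).symm
    obtain ⟨p, -, hp⟩ :=
      exists_isPath_walkWeight_eq_edist _ (ne_top_of_le_ne_top ENNReal.ofReal_ne_top hbound)
    obtain ⟨q, hq, hqR⟩ := exists_walk_of_routes w (indw H w) R (fun a b _ => hR a b) p
    obtain ⟨e', he'p, heR⟩ :=
      hqR _ (hH.mem_edges_of_walkWeight_le ht hw he q (hq.trans (hp ▸ hbound)))
    refine ⟨e', mem_of_mem_edges_toSG he'p, heR, ?_⟩
    refine (ENNReal.ofReal_le_ofReal_iff (by positivity [hw s(u, v)])).mp ?_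
    exact (ofReal_le_walkWeight_of_mem _ he'p).trans (hp ▸ hbound)

lemma Finset.eq_of_mem_of_sum_le_mul {ι : Type*} {R : Finset ι} {w : ι → ℝ} {d t : ℝ}
    (ht : t < 2) (hw : ∀ e, 0 ≤ w e) (hR : ∑ c ∈ R, w c ≤ d) {e₁ e₂ : ι}
    (he₁ : e₁ ∈ R) (he₂ : e₂ ∈ R) (hpos : 0 < w e₁) (hd₁ : d ≤ t * w e₁)
    (hd₂ : d ≤ t * w e₂) :
    e₁ = e₂ := by
  classical
  by_contra hne
  have : w e₁ + w e₂ ≤ ∑ c ∈ R, w c := by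
    rw [← Finset.sum_pair hne]
    exact Finset.sum_le_sum_of_subset_of_nonneg (Finset.insert_subset he₁ (by simpa using he₂))
      fun c _ _ => hw c
  nlinarith [hw e₂]

theorem greedy_size_optimal_general {V : Type*} [MetricSpace V] [Fintype V] [DecidableEq V]
    (t : ℝ) (ht : 1 ≤ t) (ht2 : t < 2) (H H' : Finset (Sym2 V))
    (hH : IsGreedy (mw V) t (completeE V) H)
    (hH'span : ∀ u v : V, edist H' (indw H (mw V)) s(u, v) ≤
      ENNReal.ofReal t * edist H (mw V) s(u, v)) :
    H.card ≤ H'.card := by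
  have hfin : ∀ e, edist H (mw V) e ≠ ⊤ := by
    intro e
    induction e using Sym2.ind with
    | _ a b =>
      rcases eq_or_ne a b with rfl | hab
      · exact ne_top_of_le_ne_top ENNReal.zero_ne_top
          ((edist_le_walkWeight _ Walk.nil).trans_eq (walkWeight_nil _))
      · exact ne_top_of_le_ne_top ENNReal.ofReal_ne_top
          (hH.edist_le ht mw_nonneg (by simp [completeE, hab]))
  obtain ⟨R, hRsum, hR⟩ := exists_shortest_routes H mw_nonneg hfin
  choose! φ hφH' hφR hφle using
    fun e (he : e ∈ H) => hH.exists_mem_route (by linarith) mw_nonneg hH'span R hR he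
  refine Finset.card_le_card_of_injOn φ hφH' fun e₁ he₁ e₂ he₂ hφ => ?_
  refine Finset.eq_of_mem_of_sum_le_mul ht2 mw_nonneg (hRsum (φ e₁)).le (hφR e₁ he₁)
    (hφ ▸ hφR e₂ he₂) (mw_pos ?_) (hφle e₁ he₁) (hφ ▸ hφle e₂ he₂)
  exact (Finset.mem_filter.mp (hH.subset he₁)).2

/-- Size optimality of the greedy spanner for stretch `t < 2`:
if `H` is the greedy `t`-spanner of a finite metric space `M` with `1 ≤ t < 2`
and `H'` is any `t`-spanner of the induced metric space `M_H`, then `H` has at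
most as many edges as `H'`. -/
theorem greedy_size_optimal {V : Type*} [MetricSpace V] [Fintype V] [DecidableEq V]
    (t : ℝ) (ht : 1 ≤ t) (ht2 : t < 2) (H H' : Finset (Sym2 V))
    (hH : IsGreedy (mw V) t (completeE V) H)
    (hH'sub : H' ⊆ completeE V)
    (hH'span : ∀ u v : V, edist H' (indw H (mw V)) s(u, v) ≤
      ENNReal.ofReal t * edist H (mw V) s(u, v)) :
    H.card ≤ H'.card :=
  greedy_size_optimal_general t ht ht2 H H' hH hH'span
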